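/- Let K be a number field with [K : ℚ] = 2 and let B be a central division algebra over ℚ with dim_ℚ B = 4. If there exists a ℚ-algebra embedding of K into the matrix algebra Mat₃(B) of 3×3 matrices over B, then there exists a ℚ-algebra embedding of K into B. -/

import Mathlib

/-!
Write `K = ℚ(α)` with `α² = d ∈ ℚ`. The image `M` of `α` in `Mat₃(B)` satisfies `M² = d`, so
`v ↦ v M` is a left `B`-linear endomorphism of `B³` squaring to `d`. If `d` had no square root
in `B`, then `v` and `v M` would span a stable plane for every `v ≠ 0`; passing to the quotient
lowers the dimension by two while keeping it odd, until on a line `v M = b v` forces `b² = d`.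
Hence `d = a²` for some `a ∈ B`, and `α ↦ a` embeds `K` into `B`.
-/

open Module Matrix Polynomial

namespace LinearMap

variable {D V : Type*} [DivisionRing D] [AddCommGroup V] [Module D V] {φ : V →ₗ[D] V} {c : D}

theorem mul_self_eq_of_apply_eq_smul (hφ : ∀ v, φ (φ v) = c • v) {v : V} (hv : v ≠ 0) {b : D}
    (hb : φ v = b • v) : b * b = c :=
  smul_left_injective D hv <| show (b * b) • v = c • v by
    rw [← hφ, hb, map_smul, hb, smul_smul]

theorem linearIndependent_pair_apply (hφ : ∀ v, φ (φ v) = c • v) (hc : ∀ b : D, b * b ≠ c)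
    {v : V} (hv : v ≠ 0) : LinearIndependent D ![v, φ v] :=
  (LinearIndependent.pair_iff' hv).2 fun b hb => hc b (mul_self_eq_of_apply_eq_smul hφ hv hb.symm)

theorem exists_mul_self_eq_of_odd_finrank [FiniteDimensional D V] (hV : Odd (finrank D V))
    (hφ : ∀ v, φ (φ v) = c • v) : ∃ b : D, b * b = c := by
  obtain ⟨k, hk⟩ := hV
  induction k generalizing V with
  | zero =>
    have : Nontrivial V := nontrivial_of_finrank_eq_succ hk
    obtain ⟨v, hv⟩ := exists_ne (0 : V)
    obtain ⟨b, hb⟩ := (finrank_eq_one_iff_of_nonzero' v hv).1 hk (φ v)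
    exact ⟨b, mul_self_eq_of_apply_eq_smul hφ hv hb.symm⟩
  | succ k ih =>
    by_contra! hc
    have : Nontrivial V := nontrivial_of_finrank_eq_succ hk
    obtain ⟨v, hv⟩ := exists_ne (0 : V)
    -- `span {v, φ v}` is a `φ`-stable plane, and `φ` still squares to `c` on the quotient.
    set W := Submodule.span D (Set.range ![v, φ v])
    have hWφ : W ≤ W.comap φ := by
      rw [Submodule.span_le, Set.range_subset_iff, Fin.forall_fin_two]
      refine ⟨Submodule.subset_span ⟨1, rfl⟩, ?_⟩
      show φ (φ v) ∈ W
      rw [hφ]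
      exact W.smul_mem c (Submodule.subset_span ⟨0, rfl⟩)
    have hW : finrank D W = 2 := by
      rw [finrank_span_eq_card (linearIndependent_pair_apply hφ hc hv), Fintype.card_fin]
    have hquot : finrank D (V ⧸ W) = 2 * k + 1 := by
      have := W.finrank_quotient_add_finrank
      omega
    have hψ (q : V ⧸ W) : W.mapQ W φ hWφ (W.mapQ W φ hWφ q) = c • q := by
      obtain ⟨x, rfl⟩ := W.mkQ_surjective q
      simp [hφ]
    obtain ⟨b, hb⟩ := ih hψ hquot
    exact hc b hb

end LinearMap

theorem Matrix.exists_mul_self_eq_algebraMap_of_odd_card {R D ι : Type*} [CommSemiring R]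
    [DivisionRing D] [Algebra R D] [Fintype ι] [DecidableEq ι] (hι : Odd (Fintype.card ι))
    (M : Matrix ι ι D) {r : R} (hM : M * M = algebraMap R (Matrix ι ι D) r) :
    ∃ b : D, b * b = algebraMap R D r := by
  let φ : (ι → D) →ₗ[D] (ι → D) :=
    { toFun := fun v => v ᵥ* M
      map_add' := fun v w => add_vecMul M v w
      map_smul' := fun b v => smul_vecMul b v M }
  refine LinearMap.exists_mul_self_eq_of_odd_finrank (φ := φ)
    (by rwa [finrank_fintype_fun_eq_card]) fun v => ?_
  ext i
  simp [φ, vecMul_vecMul, hM, algebraMap_eq_diagonal, vecMul_diagonal, Algebra.commutes]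

theorem exists_mul_self_eq_algebraMap_of_finrank_eq_two {F K : Type*} [Field F] [Field K]
    [Algebra F K] (h2 : (2 : F) ≠ 0) (hK : finrank F K = 2) :
    ∃ α : K, α ∉ (algebraMap F K).range ∧ ∃ d : F, α * α = algebraMap F K d := by
  have : FiniteDimensional F K := .of_finrank_pos (by omega)
  obtain ⟨β, hβ⟩ : ∃ β : K, β ∉ (algebraMap F K).range := by
    by_contra! h
    have : (⊥ : Subalgebra F K) = ⊤ := eq_top_iff.2 fun x _ => Algebra.mem_bot.2 (h x)
    have := Subalgebra.bot_eq_top_iff_finrank_eq_one.1 this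
    omega
  have hβint : IsIntegral F β := .of_finite F β
  have hdeg : (minpoly F β).natDegree = 2 :=
    le_antisymm (hK ▸ minpoly.natDegree_le β) ((minpoly.two_le_natDegree_iff hβint).2 hβ)
  set b := (minpoly F β).coeff 1
  set c := (minpoly F β).coeff 0
  have hrel : β ^ 2 + (algebraMap F K c + algebraMap F K b * β) = 0 := by
    have := minpoly.aeval F β
    rw [(minpoly.monic hβint).as_sum, hdeg] at this
    simpa [Finset.sum_range_succ] using this
  have h2K : (2 : K) ≠ 0 := by
    rw [← map_ofNat (algebraMap F K) 2]
    exact (_root_.map_ne_zero _).2 h2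
  -- completing the square
  refine ⟨2 * β + algebraMap F K b, ?_, b ^ 2 - 4 * c, ?_⟩
  · rintro ⟨r, hr⟩
    refine hβ ⟨(r - b) / 2, ?_⟩
    rw [map_div₀, map_sub, hr, map_ofNat]
    field_simp
    ring
  · simp only [map_sub, map_pow, map_mul, map_ofNat]
    linear_combination 4 * hrel

theorem minpoly_eq_X_sq_sub_C {F K : Type*} [Field F] [Field K] [Algebra F K] {α : K}
    (hα : α ∉ (algebraMap F K).range) {d : F} (hαd : α * α = algebraMap F K d) :
    minpoly F α = X ^ 2 - C d := by
  have hroot : aeval α (X ^ 2 - C d : F[X]) = 0 := by simp [sq, hαd]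
  have hint : IsIntegral F α := ⟨_, monic_X_pow_sub_C d two_ne_zero, by rwa [aeval_def] at hroot⟩
  refine (eq_of_monic_of_dvd_of_natDegree_le (minpoly.monic hint)
    (monic_X_pow_sub_C d two_ne_zero) (minpoly.dvd F α hroot) ?_).symm
  rw [natDegree_X_pow_sub_C]
  exact (minpoly.two_le_natDegree_iff hint).2 hα

theorem exists_algHom_apply_eq_of_mul_self_eq {F K B : Type*} [Field F] [Field K] [Algebra F K]
    [Ring B] [Algebra F B] (hK : finrank F K = 2) {α : K} (hα : α ∉ (algebraMap F K).range)
    {d : F} (hαd : α * α = algebraMap F K d) {a : B} (ha : a * a = algebraMap F B d) :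
    ∃ g : K →ₐ[F] B, g α = a := by
  have : FiniteDimensional F K := .of_finrank_pos (by omega)
  have hint : IsIntegral F α := .of_finite F α
  have hadjoin : Algebra.adjoin F {α} = ⊤ := by
    have := Subalgebra.isSimpleOrder_of_finrank_prime F K (hK ▸ Nat.prime_two)
    refine (eq_bot_or_eq_top _).resolve_left fun hbot => hα ?_
    exact Algebra.mem_bot.1 (hbot ▸ Algebra.self_mem_adjoin_singleton F α)
  let pb := PowerBasis.ofAdjoinEqTop hint hadjoin
  have hroot : aeval a (minpoly F pb.gen) = 0 := by
    simp [pb, minpoly_eq_X_sq_sub_C hα hαd, sq, ha]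
  exact ⟨pb.lift a hroot, pb.lift_gen a hroot⟩

theorem stmt_8_general (K : Type) [Field K] [NumberField K]
    (hK : Module.finrank ℚ K = 2)
    (B : Type) [DivisionRing B] [Algebra ℚ B]
    (h : ∃ f : K →ₐ[ℚ] Matrix (Fin 3) (Fin 3) B, Function.Injective f) :
    ∃ g : K →ₐ[ℚ] B, Function.Injective g := by
  obtain ⟨f, -⟩ := h
  obtain ⟨α, hα, d, hαd⟩ := exists_mul_self_eq_algebraMap_of_finrank_eq_two two_ne_zero hK
  obtain ⟨a, ha⟩ := Matrix.exists_mul_self_eq_algebraMap_of_odd_card (by decide) (f α)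
    (by rw [← map_mul, hαd, AlgHom.commutes])
  obtain ⟨g, -⟩ := exists_algHom_apply_eq_of_mul_self_eq hK hα hαd ha
  exact ⟨g, g.toRingHom.injective⟩

/-- Let `K` be a quadratic number field and `B` a central division algebra over `ℚ` with
`dim_ℚ B = 4` (a quaternion division algebra).  If `K` embeds as a `ℚ`-algebra into the
matrix algebra `Mat₃(B)`, then `K` embeds as a `ℚ`-algebra into `B`. -/
theorem stmt_8 (K : Type) [Field K] [NumberField K]
    (hK : Module.finrank ℚ K = 2)
    (B : Type) [DivisionRing B] [Algebra ℚ B] [Algebra.IsCentral ℚ B]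
    [FiniteDimensional ℚ B] (hB : Module.finrank ℚ B = 4)
    (h : ∃ f : K →ₐ[ℚ] Matrix (Fin 3) (Fin 3) B, Function.Injective f) :
    ∃ g : K →ₐ[ℚ] B, Function.Injective g :=
  stmt_8_general K hK B h
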